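/- Let p > 3 be a prime with p ≡ 3 (mod 4), and let C(m,n,4,2;p) = ∑_{a=0}^{p-1} e((ma⁴ + na²)/p). Then ∑_{m=1}^{p-1} ∑_{n=1}^{p-1} |C(m,n,4,2;p)|⁴ = 7p⁴ - 18p³ + 11p². -/

import Mathlib

/-!
Writing `|C|⁴ = |C²|²` with `C² = ∑_{a,b} e((m(a⁴+b⁴) + n(a²+b²))/p)`, orthogonality of
additive characters turns the moment into point counts: if `N₂`, `N₄`, `J` count the solutions
of `a²+b² = c²+d²`, of `a⁴+b⁴ = c⁴+d⁴`, and of both, the sum is `p²J - p(N₂+N₄) + p⁴`.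
Since `a²+b²-c²-d² = (a-c)(a+c) - (d-b)(d+b)`, `N₂` is the number `p³+p²-p` of solutions of
`st = uv`. As `p ≡ 3 (mod 4)`, `x ↦ x^((p+3)/2)` is a permutation of `𝔽_p` whose square is
`x⁴`, so `N₄ = N₂`. Both equations hold iff `{a², b²} = {c², d²}`, and inclusion–exclusion
gives `J = 8p² - 16p + 9`.
-/

open Finset

/-- `e y = e^{2πiy}`. -/
noncomputable def e (x : ℝ) : ℂ := Complex.exp (2 * Real.pi * x * Complex.I)

/-- The two-term exponential sum `C(m,n,k,h;q) = ∑_{a=0}^{q-1} e((m aᵏ + n aʰ)/q)`. -/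
noncomputable def twoTermExpSum (m n k h q : ℕ) : ℂ :=
  ∑ a ∈ range q, e ((m * a ^ k + n * a ^ h : ℕ) / q)

section Collisions

variable {ι κ β γ : Type*} [Fintype ι] [Fintype κ] [DecidableEq β] [DecidableEq γ]

def collisionCount (u : ι → β) : ℕ := #{ij : ι × ι | u ij.1 = u ij.2}

theorem card_filter_univ_prod (P : ι → κ → Prop) [∀ i j, Decidable (P i j)] :
    #{z : ι × κ | P z.1 z.2} = ∑ i, #{j | P i j} := by
  simp only [card_filter, Fintype.sum_prod_type]

theorem collisionCount_eq_sum_card (u : ι → β) :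
    collisionCount u = ∑ i, #{j | u i = u j} :=
  card_filter_univ_prod fun i j => u i = u j

theorem natCast_collisionCount {R : Type*} [AddCommMonoidWithOne R] (u : ι → β) :
    (collisionCount u : R) = ∑ i, ∑ j, if u i = u j then 1 else 0 := by
  simp only [collisionCount_eq_sum_card, Nat.cast_sum, sum_boole]

theorem collisionCount_comp_equiv (u : ι → β) (σ : κ ≃ ι) :
    collisionCount (u ∘ σ) = collisionCount u :=
  card_equiv (σ.prodCongr σ) (by simp)

theorem collisionCount_prodMap (f : ι → β) (g : κ → γ) :
    collisionCount (Prod.map f g) = collisionCount f * collisionCount g := by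
  simp only [collisionCount_eq_sum_card, Fintype.sum_prod_type, sum_mul_sum]
  refine sum_congr rfl fun a _ => sum_congr rfl fun b _ => ?_
  rw [← card_product, ← filter_product, univ_product_univ]
  simp [Prod.ext_iff]

end Collisions

section AddChar

theorem AddChar.norm_sq_sum {G ι : Type*} [AddCommGroup G] [Finite G] [Fintype ι]
    (ψ : AddChar G ℂ) (u : ι → G) :
    (‖∑ i, ψ (u i)‖ : ℂ) ^ 2 = ∑ i, ∑ j, ψ (u i - u j) := by
  rw [← Complex.mul_conj', map_sum, sum_mul_sum]
  simp only [← AddChar.map_neg_eq_conj, ← AddChar.map_add_eq_mul, sub_eq_add_neg]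

theorem AddChar.sq_sum {A M α : Type*} [AddMonoid A] [CommSemiring M] [Fintype α]
    (ψ : AddChar A M) (f : α → A) :
    (∑ x, ψ (f x)) ^ 2 = ∑ z : α × α, ψ (f z.1 + f z.2) := by
  simp [sq, sum_mul_sum, Fintype.sum_prod_type, AddChar.map_add_eq_mul]

variable {R ι : Type*} [CommRing R] [Fintype R] [DecidableEq R] [Fintype ι] {ψ : AddChar R ℂ}

theorem AddChar.sum_erase_zero_mul (hψ : ψ.IsPrimitive) (t : R) :
    ∑ m ∈ univ.erase 0, ψ (m * t) = (if t = 0 then (Fintype.card R : ℂ) else 0) - 1 := by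
  rw [sum_erase_eq_sub (mem_univ 0), AddChar.sum_mulShift t hψ, zero_mul,
    AddChar.map_zero_eq_one, Nat.cast_ite, Nat.cast_zero]

private lemma ite_sub_one_mul_ite_sub_one (a b : Prop) [Decidable a] [Decidable b] (q : ℂ) :
    ((if a then q else 0) - 1) * ((if b then q else 0) - 1) =
      q ^ 2 * (if a ∧ b then 1 else 0) - q * (if a then 1 else 0) - q * (if b then 1 else 0)
        + 1 := by
  by_cases ha : a <;> by_cases hb : b <;> simp [ha, hb] <;> ring

theorem AddChar.sum_erase_zero_sum_erase_zero_norm_sq (hψ : ψ.IsPrimitive) (u v : ι → R) :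
    ∑ m ∈ univ.erase 0, ∑ n ∈ univ.erase 0, ‖∑ i, ψ (m * u i + n * v i)‖ ^ 2 =
      (Fintype.card R : ℝ) ^ 2 * collisionCount (fun i => (u i, v i))
        - Fintype.card R * collisionCount u - Fintype.card R * collisionCount v
        + (Fintype.card ι : ℝ) ^ 2 := by
  apply Complex.ofReal_injective
  push_cast
  simp only [AddChar.norm_sq_sum]
  calc _ = ∑ i, ∑ j, (∑ m ∈ univ.erase 0, ψ (m * (u i - u j))) *
        ∑ n ∈ univ.erase 0, ψ (n * (v i - v j)) := by
        simp only [sum_mul_sum, ← AddChar.map_add_eq_mul,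
          sum_comm (s := univ.erase (0 : R)) (t := (univ : Finset ι))]
        ring_nf
    _ = _ := by
      simp only [AddChar.sum_erase_zero_mul hψ, sub_eq_zero, ite_sub_one_mul_ite_sub_one,
        sum_add_distrib, sum_sub_distrib, ← mul_sum, natCast_collisionCount, Prod.mk.injEq]
      simp [sq]

end AddChar

section FiniteField

variable {K : Type*} [Field K]

theorem pow_four_add_eq_and_sq_add_eq_iff (h2 : (2 : K) ≠ 0) (a b c d : K) :
    (a ^ 4 + b ^ 4 = c ^ 4 + d ^ 4 ∧ a ^ 2 + b ^ 2 = c ^ 2 + d ^ 2) ↔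
      (a ^ 2 = c ^ 2 ∧ b ^ 2 = d ^ 2) ∨ (a ^ 2 = d ^ 2 ∧ b ^ 2 = c ^ 2) := by
  constructor
  · rintro ⟨hfour, hsq⟩
    have key : (a ^ 2 - c ^ 2) * (a ^ 2 - d ^ 2) = 0 := by
      have : 2 * ((a ^ 2 - c ^ 2) * (a ^ 2 - d ^ 2)) = 0 := by
        linear_combination (a ^ 2 - b ^ 2 - c ^ 2 - d ^ 2) * hsq + hfour
      exact (mul_eq_zero.mp this).resolve_left h2
    rcases mul_eq_zero.mp key with h | h
    · exact .inl ⟨by linear_combination h, by linear_combination hsq - h⟩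
    · exact .inr ⟨by linear_combination h, by linear_combination hsq - h⟩
  · rintro (⟨hac, hbd⟩ | ⟨had, hbc⟩)
    · exact ⟨by linear_combination (a ^ 2 + c ^ 2) * hac + (b ^ 2 + d ^ 2) * hbd,
        by linear_combination hac + hbd⟩
    · exact ⟨by linear_combination (a ^ 2 + d ^ 2) * had + (b ^ 2 + c ^ 2) * hbc,
        by linear_combination had + hbc⟩

variable [Fintype K]

local notation "q" => (Fintype.card K : ℤ)

theorem exists_equiv_mul_eq_sq_sub_sq (h2 : (2 : K) ≠ 0) :
    ∃ φ : K × K ≃ K × K, ∀ z, (φ z).1 * (φ z).2 = z.1 ^ 2 - z.2 ^ 2 := by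
  have hinj : Function.Injective fun z : K × K => (z.1 - z.2, z.1 + z.2) := by
    intro z w h
    simp only [Prod.mk.injEq] at h
    have h1 : 2 * z.1 = 2 * w.1 := by linear_combination h.1 + h.2
    have h1' := mul_left_cancel₀ h2 h1
    exact Prod.ext h1' (by linear_combination h.2 - h1')
  exact ⟨Equiv.ofBijective _ (Finite.injective_iff_bijective.mp hinj), fun z => by
    simp only [Equiv.ofBijective_apply]; ring⟩

theorem exists_equiv_sq_eq_pow_four (hK : Fintype.card K % 4 = 3) :
    ∃ σ : K ≃ K, ∀ x, σ x ^ 2 = x ^ 4 := by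
  obtain ⟨j, hj⟩ : ∃ j, Fintype.card K = 4 * j + 3 := ⟨Fintype.card K / 4, by omega⟩
  have hsq (x : K) : (x ^ (2 * j + 3)) ^ 2 = x ^ 4 := by
    rw [← pow_mul, show (2 * j + 3) * 2 = Fintype.card K + 3 by omega, pow_add,
      FiniteField.pow_card, ← pow_succ']
  -- the quotient of two preimages of one point has order dividing both `4` and `2j + 3`
  have hinj : Function.Injective fun x : K => x ^ (2 * j + 3) := by
    intro x y hxy
    simp only at hxy
    by_cases hy : y = 0
    · subst hy
      exact pow_eq_zero_iff (by omega) |>.mp (hxy.trans (zero_pow (by omega)))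
    have h4 : (x / y) ^ 4 = 1 := by
      rw [div_pow, ← hsq, ← hsq, hxy, div_self (pow_ne_zero _ (pow_ne_zero _ hy))]
    have hk : (x / y) ^ (2 * j + 3) = 1 := by
      rw [div_pow, hxy, div_self (pow_ne_zero _ hy)]
    have hcop : Nat.Coprime 4 (2 * j + 3) :=
      (Nat.coprime_two_left.mpr ⟨j + 1, by ring⟩).pow_left 2
    have := pow_gcd_eq_one.mpr ⟨h4, hk⟩
    rwa [hcop.gcd_eq_one, pow_one, div_eq_one_iff_eq hy] at this
  exact ⟨Equiv.ofBijective _ (Finite.injective_iff_bijective.mp hinj), hsq⟩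

variable [DecidableEq K]

theorem sum_ite_eq_zero_int (x y : ℤ) :
    ∑ a : K, (if a = 0 then x else y) = x + (q - 1) * y := by
  rw [sum_ite, filter_eq', filter_ne', if_pos (mem_univ _), sum_singleton, sum_const,
    card_erase_of_mem (mem_univ _), card_univ, nsmul_eq_mul, Nat.cast_pred Fintype.card_pos]

theorem card_sq_eq_sq (h2 : (2 : K) ≠ 0) (a : K) :
    #{c : K | a ^ 2 = c ^ 2} = if a = 0 then 1 else 2 := by
  have hfilter : ({c : K | a ^ 2 = c ^ 2} : Finset K) = {a, -a} := by
    ext c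
    simp [sq_eq_sq_iff_eq_or_eq_neg, eq_comm (a := c), neg_eq_iff_eq_neg]
  split_ifs with ha
  · rw [hfilter, ha, neg_zero, pair_eq_singleton, card_singleton]
  · have hne : a ≠ -a := fun h =>
      ha <| (mul_eq_zero.mp (by linear_combination h : 2 * a = 0)).resolve_left h2
    rw [hfilter, card_pair hne]

theorem collisionCount_sq (h2 : (2 : K) ≠ 0) :
    (collisionCount (fun x : K => x ^ 2) : ℤ) = 2 * q - 1 := by
  rw [collisionCount_eq_sum_card]
  push_cast
  simp only [card_sq_eq_sq h2, Nat.cast_ite, Nat.cast_one, Nat.cast_ofNat, sum_ite_eq_zero_int]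
  ring

theorem card_fiber_mul (y : K) :
    (#{z : K × K | y = z.1 * z.2} : ℤ) = q - 1 + if y = 0 then q else 0 := by
  have hfiber (x : K) :
      #{w | y = x * w} = if x = 0 then (if y = 0 then Fintype.card K else 0) else 1 := by
    by_cases hx : x = 0
    · by_cases hy : y = 0 <;> simp [hx, hy]
    · simp [hx, eq_comm (a := y), ← eq_inv_mul_iff_mul_eq₀ hx, filter_eq']
  rw [card_filter_univ_prod (fun x w => y = x * w)]
  push_cast
  simp only [hfiber, Nat.cast_ite, Nat.cast_zero, Nat.cast_one, sum_ite_eq_zero_int]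
  ring

theorem collisionCount_mul :
    (collisionCount (fun z : K × K => z.1 * z.2) : ℤ) = q ^ 3 + q ^ 2 - q := by
  rw [collisionCount_eq_sum_card]
  push_cast
  simp only [card_fiber_mul, sum_add_distrib, ← sum_filter, sum_const, card_univ,
    Fintype.card_prod, nsmul_eq_mul]
  rw [filter_congr fun z _ => eq_comm, card_fiber_mul 0, if_pos rfl]
  push_cast
  ring

theorem collisionCount_sq_add_sq (h2 : (2 : K) ≠ 0) :
    (collisionCount (fun z : K × K => z.1 ^ 2 + z.2 ^ 2) : ℤ) = q ^ 3 + q ^ 2 - q := by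
  obtain ⟨φ, hφ⟩ := exists_equiv_mul_eq_sq_sub_sq h2
  have hdiff : (fun z : K × K => z.1 ^ 2 - z.2 ^ 2) = (fun z : K × K => z.1 * z.2) ∘ φ :=
    funext fun z => (hφ z).symm
  -- `a² + b² = c² + d²` is `a² - c² = d² - b²`
  let swap : (K × K) × (K × K) ≃ (K × K) × (K × K) :=
    ⟨fun z => ((z.1.1, z.2.1), (z.2.2, z.1.2)), fun z => ((z.1.1, z.2.2), (z.1.2, z.2.1)),
      fun _ => rfl, fun _ => rfl⟩
  have hswap : collisionCount (fun z : K × K => z.1 ^ 2 + z.2 ^ 2) =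
      collisionCount (fun z : K × K => z.1 ^ 2 - z.2 ^ 2) := by
    refine card_equiv swap fun z => ?_
    simp only [mem_filter, mem_univ, true_and, swap, Equiv.coe_fn_mk]
    constructor <;> intro h <;> linear_combination h
  rw [hswap, hdiff, collisionCount_comp_equiv, collisionCount_mul]

theorem card_four_sq_eq (h2 : (2 : K) ≠ 0) :
    (#{z : (K × K) × (K × K) |
      z.1.1 ^ 2 = z.1.2 ^ 2 ∧ z.1.1 ^ 2 = z.2.1 ^ 2 ∧ z.1.1 ^ 2 = z.2.2 ^ 2} : ℤ) =
      8 * q - 7 := by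
  rw [card_filter]
  simp only [Fintype.sum_prod_type, ite_and, sum_ite_irrel, sum_const_zero]
  simp only [← sum_filter, sum_const, smul_eq_mul, mul_one, card_sq_eq_sq h2]
  push_cast
  simp only [apply_ite (fun r : ℤ => r * (r * r)), sum_ite_eq_zero_int]
  ring

theorem collisionCount_pow_four_add_pow_four_sq_add_sq (h2 : (2 : K) ≠ 0) :
    (collisionCount (fun z : K × K => (z.1 ^ 4 + z.2 ^ 4, z.1 ^ 2 + z.2 ^ 2)) : ℤ) =
      8 * q ^ 2 - 16 * q + 9 := by
  set sq2 : K × K → K × K := Prod.map (· ^ 2) (· ^ 2)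
  set P : Finset ((K × K) × (K × K)) := {ij | sq2 ij.1 = sq2 ij.2}
  set P' : Finset ((K × K) × (K × K)) := {ij | sq2 ij.1 = (sq2 ij.2).swap}
  have hunion : collisionCount (fun z : K × K => (z.1 ^ 4 + z.2 ^ 4, z.1 ^ 2 + z.2 ^ 2)) =
      #(P ∪ P') := by
    rw [collisionCount]
    congr 1
    ext ⟨⟨a, b⟩, ⟨c, d⟩⟩
    simp [P, P', sq2, pow_four_add_eq_and_sq_add_eq_iff h2]
  have hP : (#P : ℤ) = (2 * q - 1) ^ 2 := by
    rw [show #P = collisionCount sq2 from rfl, collisionCount_prodMap, Nat.cast_mul,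
      collisionCount_sq h2, sq]
  have hP' : #P' = #P :=
    card_equiv ((Equiv.refl _).prodCongr (Equiv.prodComm _ _)) (by simp [P, P', sq2])
  have hinter : P ∩ P' = ({z : (K × K) × (K × K) |
      z.1.1 ^ 2 = z.1.2 ^ 2 ∧ z.1.1 ^ 2 = z.2.1 ^ 2 ∧ z.1.1 ^ 2 = z.2.2 ^ 2} : Finset _) := by
    ext ⟨⟨a, b⟩, ⟨c, d⟩⟩
    simp only [P, P', sq2, mem_inter, mem_filter, mem_univ, true_and, Prod.map, Prod.swap,
      Prod.mk.injEq]
    constructor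
    · rintro ⟨⟨hac, hbd⟩, had, -⟩
      exact ⟨had.trans hbd.symm, hac, had⟩
    · rintro ⟨hab, hac, had⟩
      exact ⟨⟨hac, hab.symm.trans had⟩, had, hab.symm.trans hac⟩
  have hcard : (#(P ∪ P') : ℤ) + #(P ∩ P') = #P + #P' :=
    mod_cast card_union_add_card_inter P P'
  rw [hinter, card_four_sq_eq h2, hP', hP] at hcard
  rw [hunion]
  linear_combination hcard

theorem collisionCount_pow_four_add_pow_four (hK : Fintype.card K % 4 = 3) :
    collisionCount (fun z : K × K => z.1 ^ 4 + z.2 ^ 4) =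
      collisionCount (fun z : K × K => z.1 ^ 2 + z.2 ^ 2) := by
  obtain ⟨σ, hσ⟩ := exists_equiv_sq_eq_pow_four hK
  have hcomp : (fun z : K × K => z.1 ^ 4 + z.2 ^ 4) =
      (fun z : K × K => z.1 ^ 2 + z.2 ^ 2) ∘ σ.prodCongr σ :=
    funext fun z => by simp [hσ]
  rw [hcomp, collisionCount_comp_equiv]

end FiniteField

section ZModSums

variable {M : Type*} [AddCommMonoid M] {N : ℕ} [NeZero N]

theorem ZMod.sum_range_natCast (f : ZMod N → M) : ∑ a ∈ range N, f a = ∑ x, f x :=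
  sum_nbij' (↑) ZMod.val (by simp) (fun x _ => by simp [ZMod.val_lt])
    (fun a ha => ZMod.val_cast_of_lt (mem_range.mp ha)) (fun x _ => ZMod.natCast_zmod_val x)
    (fun _ _ => rfl)

theorem ZMod.sum_Icc_natCast (f : ZMod N → M) :
    ∑ a ∈ Icc 1 (N - 1), f a = ∑ x ∈ univ.erase 0, f x :=
  sum_nbij' (↑) ZMod.val
    (fun a ha => by
      simp only [mem_Icc] at ha
      rw [mem_erase, Ne, ZMod.natCast_eq_zero_iff]
      exact ⟨Nat.not_dvd_of_pos_of_lt (by omega) (by omega), mem_univ _⟩)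
    (fun x hx => by
      have := (ZMod.val_ne_zero x).mpr (ne_of_mem_erase hx)
      have := ZMod.val_lt x
      rw [mem_Icc]
      omega)
    (fun a ha => ZMod.val_cast_of_lt (by simp at ha; omega)) (fun x _ => ZMod.natCast_zmod_val x)
    (fun _ _ => rfl)

end ZModSums

theorem twoTermExpSum_eq_sum_stdAddChar (m n k h N : ℕ) [NeZero N] :
    twoTermExpSum m n k h N = ∑ x : ZMod N, ZMod.stdAddChar (N := N) (m * x ^ k + n * x ^ h) := by
  rw [twoTermExpSum, ← ZMod.sum_range_natCast]
  refine sum_congr rfl fun a _ => ?_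
  rw [show (m : ZMod N) * a ^ k + n * a ^ h = ((m * a ^ k + n * a ^ h : ℕ) : ℤ) by
    push_cast; ring, ZMod.stdAddChar_coe, e]
  congr 1
  push_cast
  ring

theorem stmt_5_general (p : ℕ) (hp : p.Prime) (h4 : p % 4 = 3) :
    ∑ m ∈ Icc 1 (p - 1), ∑ n ∈ Icc 1 (p - 1),
      (‖twoTermExpSum m n 4 2 p‖) ^ 4
    = 7 * (p : ℝ) ^ 4 - 18 * (p : ℝ) ^ 3 + 11 * (p : ℝ) ^ 2 := by
  have := Fact.mk hp
  have h2 : (2 : ZMod p) ≠ 0 := Ring.two_ne_zero (by rw [ZMod.ringChar_zmod_n]; omega)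
  set F : ZMod p → ZMod p → ℝ := fun x y => ‖∑ z : ZMod p × ZMod p,
    ZMod.stdAddChar (x * (z.1 ^ 4 + z.2 ^ 4) + y * (z.1 ^ 2 + z.2 ^ 2))‖ ^ 2
  have hsq (m n : ZMod p) : ∑ z : ZMod p × ZMod p,
      ZMod.stdAddChar (m * (z.1 ^ 4 + z.2 ^ 4) + n * (z.1 ^ 2 + z.2 ^ 2)) =
      (∑ x, ZMod.stdAddChar (m * x ^ 4 + n * x ^ 2)) ^ 2 := by
    rw [AddChar.sq_sum]
    exact sum_congr rfl fun z _ => congrArg _ (by ring)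
  have hsummand (m n : ℕ) : ‖twoTermExpSum m n 4 2 p‖ ^ 4 = F m n := by
    simp only [F, hsq, twoTermExpSum_eq_sum_stdAddChar, norm_pow, ← pow_mul]
  simp only [hsummand, ZMod.sum_Icc_natCast]
  rw [ZMod.sum_Icc_natCast fun x => ∑ y ∈ univ.erase 0, F x y,
    AddChar.sum_erase_zero_sum_erase_zero_norm_sq (ZMod.isPrimitive_stdAddChar p),
    collisionCount_pow_four_add_pow_four (by rwa [ZMod.card])]
  have hN : (collisionCount fun z : ZMod p × ZMod p => z.1 ^ 2 + z.2 ^ 2 : ℝ) =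
      p ^ 3 + p ^ 2 - p := by
    exact_mod_cast ZMod.card p ▸ collisionCount_sq_add_sq h2
  have hJ : (collisionCount fun z : ZMod p × ZMod p => (z.1 ^ 4 + z.2 ^ 4, z.1 ^ 2 + z.2 ^ 2) :
      ℝ) = 8 * p ^ 2 - 16 * p + 9 := by
    exact_mod_cast ZMod.card p ▸ collisionCount_pow_four_add_pow_four_sq_add_sq h2
  rw [hN, hJ, Fintype.card_prod, ZMod.card]
  push_cast
  ring

theorem stmt_5 (p : ℕ) (hp : p.Prime) (h3 : 3 < p) (h4 : p % 4 = 3) :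
    ∑ m ∈ Icc 1 (p - 1), ∑ n ∈ Icc 1 (p - 1),
      (‖twoTermExpSum m n 4 2 p‖) ^ 4
    = 7 * (p : ℝ) ^ 4 - 18 * (p : ℝ) ^ 3 + 11 * (p : ℝ) ^ 2 :=
  stmt_5_general p hp h4
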